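/- Let $\tau \in \mathcal{H}$, let $k$ be a nonzero integer, and let $l \ge 0$ be an integer. Then, with $q = e^{2\pi i \tau}$, $\frac{1}{1-q^k}\left(\frac{q^k}{1-q^k}\right)^l = \sum_{m=0}^l \frac{1}{l!}\,(2\pi i k)^{-m}\, s(l,m)\, \partial_\tau^m (1-q^k)^{-1}$, where $s(l,m)$ are the signed Stirling numbers of the first kind. -/

import Mathlib

open Complex Real

/-- `q τ = e^{2πiτ}`. -/
noncomputable def qexp (τ : ℂ) : ℂ := Complex.exp (2 * (π : ℂ) * I * τ)

/-- Signed Stirling numbers of the first kind: `s(n,k)` is the coefficient of `x^k`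
in the falling factorial `x(x-1)⋯(x-n+1)`. -/
noncomputable def stirling1 (n k : ℕ) : ℤ := (descPochhammer ℤ n).coeff k

section aux

variable (k : ℤ) (c : ℂ)

lemma qpow (τ : ℂ) : qexp τ ^ k = Complex.exp (2 * (π : ℂ) * I * k * τ) := by
  rw [qexp, ← Complex.exp_int_mul]
  ring_nf

lemma cne (hk : k ≠ 0) : (2 * (π : ℂ) * I * k) ≠ 0 := by
  simp [Complex.ofReal_ne_zero, Real.pi_ne_zero, Complex.I_ne_zero, hk]

lemma ene (hk : k ≠ 0) {τ : ℂ} (hτ : 0 < τ.im) :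
    1 - Complex.exp (2 * (π : ℂ) * I * k * τ) ≠ 0 := by
  intro h
  have h1 : Complex.exp (2 * (π : ℂ) * I * k * τ) = 1 := by linear_combination -h
  have h2 := congrArg (‖·‖) h1
  rw [Complex.norm_exp, norm_one, Real.exp_eq_one_iff] at h2
  have hre : (2 * (π : ℂ) * I * k * τ).re = -(2 * π * k * τ.im) := by
    simp [Complex.mul_re, Complex.mul_im]
  rw [hre, neg_eq_zero] at h2
  have hkr : (k : ℝ) ≠ 0 := Int.cast_ne_zero.mpr hk
  simp [Real.pi_ne_zero, mul_eq_zero, hkr, hτ.ne'] at h2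

lemma stirling1_zero_right (l : ℕ) : stirling1 (l + 1) 0 = -(l : ℤ) * stirling1 l 0 := by
  simp only [stirling1, descPochhammer_succ_right]
  rw [mul_sub, Polynomial.coeff_sub, Polynomial.coeff_mul_X_zero]
  rw [← Polynomial.C_eq_natCast, Polynomial.coeff_mul_C]
  ring

lemma stirling1_succ (l m : ℕ) :
    stirling1 (l + 1) (m + 1) = stirling1 l m - (l : ℤ) * stirling1 l (m + 1) := by
  simp only [stirling1, descPochhammer_succ_right]
  rw [mul_sub, Polynomial.coeff_sub, Polynomial.coeff_mul_X]
  rw [← Polynomial.C_eq_natCast, Polynomial.coeff_mul_C]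
  ring

lemma stirling1_top (l : ℕ) : stirling1 l (l + 1) = 0 := by
  apply Polynomial.coeff_eq_zero_of_natDegree_lt
  rw [descPochhammer_natDegree]
  omega

/-- The basic function `t ↦ (1 - e^{ct})⁻¹`. -/
noncomputable def FF (c : ℂ) : ℂ → ℂ := fun t => (1 - Complex.exp (c * t))⁻¹

lemma hF {τ : ℂ} (h : 1 - Complex.exp (c * τ) ≠ 0) :
    HasDerivAt (FF c) (c * FF c τ * (FF c τ - 1)) τ := by
  have h1 : HasDerivAt (fun t : ℂ => Complex.exp (c * t)) (Complex.exp (c * τ) * (c * 1)) τ :=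
    ((hasDerivAt_id τ).const_mul c).cexp
  have h2 := (h1.const_sub 1).inv h
  refine h2.congr_deriv ?_
  unfold FF
  field_simp
  ring

lemma FFanalytic {U : Set ℂ} (hU : IsOpen U) (hne : ∀ τ ∈ U, 1 - Complex.exp (c * τ) ≠ 0) :
    AnalyticOnNhd ℂ (FF c) U :=
  DifferentiableOn.analyticOnNhd
    (fun τ hτ => ((hF c (hne τ hτ)).differentiableAt).differentiableWithinAt) hU

lemma hIter {U : Set ℂ} (hU : IsOpen U) (hne : ∀ τ ∈ U, 1 - Complex.exp (c * τ) ≠ 0)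
    (m : ℕ) {τ : ℂ} (hτ : τ ∈ U) :
    HasDerivAt (iteratedDeriv m (FF c)) (iteratedDeriv (m + 1) (FF c) τ) τ := by
  have h1 : AnalyticOnNhd ℂ (iteratedDeriv m (FF c)) U := by
    rw [iteratedDeriv_eq_iterate]
    exact (FFanalytic c hU hne).iterated_deriv m
  have h2 := ((h1 τ hτ).differentiableAt).hasDerivAt
  rwa [← iteratedDeriv_succ] at h2

lemma hzpow (hc : c ≠ 0) (i : ℕ) :
    c ^ (-((i + 1 : ℕ) : ℤ)) = c⁻¹ * c ^ (-(i : ℤ)) := by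
  push_cast
  rw [show -((i : ℤ) + 1) = (-1) + -(i : ℤ) by ring, zpow_add₀ hc, zpow_neg_one]

lemma sum_step (hc : c ≠ 0) (l : ℕ) (g : ℕ → ℂ) :
    ∑ m ∈ Finset.range (l + 2), c ^ (-(m : ℤ)) * ((stirling1 (l + 1) m : ℤ) : ℂ) * g m
      = c⁻¹ * (∑ m ∈ Finset.range (l + 1),
            c ^ (-(m : ℤ)) * ((stirling1 l m : ℤ) : ℂ) * g (m + 1))
        - l * ∑ m ∈ Finset.range (l + 1),
            c ^ (-(m : ℤ)) * ((stirling1 l m : ℤ) : ℂ) * g m := by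
  rw [Finset.sum_range_succ'
    (fun m => c ^ (-(m : ℤ)) * ((stirling1 (l + 1) m : ℤ) : ℂ) * g m) (l + 1)]
  rw [Finset.sum_range_succ'
    (fun m => c ^ (-(m : ℤ)) * ((stirling1 l m : ℤ) : ℂ) * g m) l]
  have key : ∀ i ∈ Finset.range (l + 1),
      c ^ (-((i + 1 : ℕ) : ℤ)) * ((stirling1 (l + 1) (i + 1) : ℤ) : ℂ) * g (i + 1)
        = c⁻¹ * (c ^ (-(i : ℤ)) * ((stirling1 l i : ℤ) : ℂ) * g (i + 1))
          - (l : ℂ) * (c ^ (-((i + 1 : ℕ) : ℤ)) * ((stirling1 l (i + 1) : ℤ) : ℂ) * g (i + 1)) := by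
    intro i _
    rw [stirling1_succ, hzpow c hc i]
    push_cast
    ring
  rw [Finset.sum_congr rfl key, Finset.sum_sub_distrib, ← Finset.mul_sum, ← Finset.mul_sum]
  rw [Finset.sum_range_succ
    (fun i => c ^ (-((i + 1 : ℕ) : ℤ)) * ((stirling1 l (i + 1) : ℤ) : ℂ) * g (i + 1)) l]
  rw [stirling1_top, stirling1_zero_right]
  push_cast
  ring

lemma key_lemma (hc : c ≠ 0) {U : Set ℂ} (hU : IsOpen U)
    (hne : ∀ τ ∈ U, 1 - Complex.exp (c * τ) ≠ 0) (l : ℕ) :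
    ∀ ⦃τ : ℂ⦄, τ ∈ U →
      (l.factorial : ℂ) * (FF c τ * (FF c τ - 1) ^ l)
        = ∑ m ∈ Finset.range (l + 1),
            c ^ (-(m : ℤ)) * ((stirling1 l m : ℤ) : ℂ) * iteratedDeriv m (FF c) τ := by
  induction l with
  | zero =>
    intro τ hτ
    simp [stirling1, iteratedDeriv_zero]
  | succ l IH =>
    intro τ hτ
    have hev : (fun t => (l.factorial : ℂ) * (FF c t * (FF c t - 1) ^ l))
        =ᶠ[nhds τ] (fun t => ∑ m ∈ Finset.range (l + 1),
            c ^ (-(m : ℤ)) * ((stirling1 l m : ℤ) : ℂ) * iteratedDeriv m (FF c) t) :=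
      Filter.eventuallyEq_of_mem (hU.mem_nhds hτ) (fun x hx => IH hx)
    have hA : HasDerivAt (fun t => (l.factorial : ℂ) * (FF c t * (FF c t - 1) ^ l))
        (c * (l.factorial : ℂ) * ((l + 1) * (FF c τ * (FF c τ - 1) ^ (l + 1))
          + l * (FF c τ * (FF c τ - 1) ^ l))) τ := by
      have h1 := hF c (hne τ hτ)
      have h3 := (h1.mul ((h1.sub_const 1).pow l)).const_mul (l.factorial : ℂ)
      refine h3.congr_deriv ?_
      rcases l with _ | n
      · push_cast; simp only [Pi.pow_apply]; ring
      · push_cast; simp only [Pi.pow_apply]; ring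
    have hB : HasDerivAt (fun t => ∑ m ∈ Finset.range (l + 1),
          c ^ (-(m : ℤ)) * ((stirling1 l m : ℤ) : ℂ) * iteratedDeriv m (FF c) t)
        (∑ m ∈ Finset.range (l + 1),
          c ^ (-(m : ℤ)) * ((stirling1 l m : ℤ) : ℂ) * iteratedDeriv (m + 1) (FF c) τ) τ :=
      HasDerivAt.fun_sum fun m _ => (hIter c hU hne m hτ).const_mul _
    have E1 := hev.deriv_eq
    rw [hA.deriv, hB.deriv] at E1
    have E2 := IH hτ
    rw [sum_step c hc l (fun m => iteratedDeriv m (FF c) τ)]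
    rw [← E1, ← E2]
    have hfac : ((l + 1).factorial : ℂ) = (l + 1) * (l.factorial : ℂ) := by
      rw [Nat.factorial_succ]; push_cast; ring
    rw [hfac]
    field_simp
    ring

end aux

/-- For `τ` in the upper half-plane, `k ≠ 0` an integer and `l ≥ 0`,
`(1-q^k)⁻¹·(q^k/(1-q^k))^l = ∑_{m=0}^l (1/l!)·(2πik)^(-m)·s(l,m)·∂_τ^m (1-q^k)⁻¹`. -/
theorem stmt2 (k : ℤ) (hk : k ≠ 0) (τ : ℂ) (hτ : 0 < τ.im) (l : ℕ) :
    (1 / (1 - qexp τ ^ k)) * (qexp τ ^ k / (1 - qexp τ ^ k)) ^ l =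
      ∑ m ∈ Finset.range (l + 1),
        (1 / (l.factorial : ℂ)) * (2 * (π : ℂ) * I * k) ^ (-(m : ℤ)) *
          ((stirling1 l m : ℤ) : ℂ) *
            iteratedDeriv m (fun t : ℂ => (1 - qexp t ^ k)⁻¹) τ := by
  set c : ℂ := 2 * (π : ℂ) * I * k with hcdef
  have hc : c ≠ 0 := cne k hk
  have hfun : (fun t : ℂ => (1 - qexp t ^ k)⁻¹) = FF c := funext fun t => by
    rw [qpow, FF]
  have hU : IsOpen {z : ℂ | 0 < z.im} := isOpen_lt continuous_const Complex.continuous_im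
  have hne : ∀ τ ∈ {z : ℂ | 0 < z.im}, 1 - Complex.exp (c * τ) ≠ 0 :=
    fun τ hτ => ene k hk hτ
  have hkey := key_lemma c hc hU hne l (τ := τ) hτ
  have hneτ : 1 - Complex.exp (c * τ) ≠ 0 := hne τ hτ
  have hlf : (l.factorial : ℂ) ≠ 0 := Nat.cast_ne_zero.mpr l.factorial_ne_zero
  rw [hfun, qpow]
  calc (1 / (1 - Complex.exp (c * τ))) * (Complex.exp (c * τ) / (1 - Complex.exp (c * τ))) ^ l
      = (1 / (l.factorial : ℂ)) *
          ((l.factorial : ℂ) * (FF c τ * (FF c τ - 1) ^ l)) := by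
        rw [FF]
        field_simp
        ring
    _ = ∑ m ∈ Finset.range (l + 1),
          (1 / (l.factorial : ℂ)) * c ^ (-(m : ℤ)) * ((stirling1 l m : ℤ) : ℂ) *
            iteratedDeriv m (FF c) τ := by
        rw [hkey, Finset.mul_sum]
        exact Finset.sum_congr rfl fun m _ => by ring
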